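/- There exists a resolvable K_{1,3}-group divisible design of type 4^3 and index 3: the multigraph on 12 vertices with three groups of size 4 and 3 edges between each cross-group pair can be decomposed into 3-stars grouped into 16 parallel classes (each of three vertex-disjoint stars covering all 12 vertices). -/

import Mathlib

/-- The multiset of edges of a simple graph on `Fin m`. -/
noncomputable def edgeMultiset {m : ℕ} (H : SimpleGraph (Fin m)) : Multiset (Sym2 (Fin m)) :=
  (Set.toFinite H.edgeSet).toFinset.val

/-- The number of edges of a simple graph on `Fin m`. -/
noncomputable def edgeCount {m : ℕ} (H : SimpleGraph (Fin m)) : ℕ := (edgeMultiset H).card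

/-- The multiset of edges of the copy of `G` given by the embedding `f`. -/
noncomputable def blockEdges {n v : ℕ} (G : SimpleGraph (Fin n)) (f : Fin n ↪ Fin v) :
    Multiset (Sym2 (Fin v)) :=
  (edgeMultiset G).map (Sym2.map ⇑f)

/-- `classes` is a resolvable decomposition of the multigraph `lam • H` into copies
of `G`: each parallel class covers every vertex exactly once, and the edges of all
blocks, counted with multiplicity, are exactly the edges of `H` taken `lam` times. -/
def IsResolvableDecomp {n v : ℕ} (lam : ℕ) (G : SimpleGraph (Fin n))
    (H : SimpleGraph (Fin v))
    (classes : Multiset (Multiset (Fin n ↪ Fin v))) : Prop :=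
  (∀ P ∈ classes, P.bind (fun f => Multiset.map ⇑f Finset.univ.val) =
      (Finset.univ : Finset (Fin v)).val) ∧
  (classes.bind id).bind (fun f => blockEdges G f) = lam • edgeMultiset H

/-- A resolvable `(λ K_v, G)`-design. -/
def IsResolvableDesign {n : ℕ} (lam v : ℕ) (G : SimpleGraph (Fin n))
    (classes : Multiset (Multiset (Fin n ↪ Fin v))) : Prop :=
  IsResolvableDecomp lam G (⊤ : SimpleGraph (Fin v)) classes

/-- The 4-cycle `C₄`. -/
def cycle4 : SimpleGraph (Fin 4) :=
  SimpleGraph.fromRel (fun a b => (a.val, b.val) ∈ [(0,1),(1,2),(2,3),(3,0)])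

/-- The kite `K₃ + e` (triangle `0,1,2` with pendant edge `{2,3}`). -/
def kite : SimpleGraph (Fin 4) :=
  SimpleGraph.fromRel (fun a b => (a.val, b.val) ∈ [(0,1),(0,2),(1,2),(2,3)])

/-- The 3-star `K_{1,3}` with center `0`. -/
def star3 : SimpleGraph (Fin 4) :=
  SimpleGraph.fromRel (fun a b => (a.val, b.val) ∈ [(0,1),(0,2),(0,3)])

/-- The graph `K₄ - e` (missing the edge `{2,3}`). -/
def k4e : SimpleGraph (Fin 4) :=
  SimpleGraph.fromRel (fun a b => (a.val, b.val) ∈ [(0,1),(0,2),(1,2),(0,3),(1,3)])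

/-- The complete tripartite host graph of group type `4³`: three groups of size 4
(the residue classes mod 3 in `Fin 12`), adjacency exactly between different groups. -/
def host43 : SimpleGraph (Fin 12) :=
  SimpleGraph.fromRel (fun a b => a.val % 3 ≠ b.val % 3)

/-!
All blocks are translates, under `ℤ₁₂`, of the stars `(4;0,3,8)`, `(6;1,2,5)`, `(9;7,10,11)`
(a parallel class) and `(2;0,7,9)`. The first three give twelve parallel classes by translation.
The orbit of `(2;0,7,9)` has twelve blocks and `(2;0,7,9) + {0,4,8}` is a parallel class, so its
translates by `0,1,2,3` give the remaining four classes. Edges of `host43` are the pairs whose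
difference is `±1, ±2, ±4` or `±5`, and each of these differences arises exactly three times
among the twelve edges of the four base stars, so every edge is covered exactly three times.
-/

instance : DecidableRel star3.Adj := fun a b => inferInstanceAs (Decidable (a ≠ b ∧ _))

instance : DecidableRel host43.Adj := fun a b => inferInstanceAs (Decidable (a ≠ b ∧ _))

theorem edgeMultiset_eq_edgeFinset_val {m : ℕ} (H : SimpleGraph (Fin m)) [DecidableRel H.Adj] :
    edgeMultiset H = H.edgeFinset.val := by
  unfold edgeMultiset
  congr 1
  ext e
  simp [SimpleGraph.mem_edgeFinset]

section Translation

variable {n v : ℕ}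

def IsParallelClass (P : Multiset (Fin n ↪ Fin v)) : Prop :=
  P.bind (fun f => Multiset.map ⇑f Finset.univ.val) = (Finset.univ : Finset (Fin v)).val

theorem IsParallelClass.map_trans {P : Multiset (Fin n ↪ Fin v)} (hP : IsParallelClass P)
    (σ : Fin v ≃ Fin v) : IsParallelClass (P.map (·.trans σ.toEmbedding)) := by
  unfold IsParallelClass at hP ⊢
  calc (P.map (·.trans σ.toEmbedding)).bind
        (fun f : Fin n ↪ Fin v => Multiset.map ⇑f Finset.univ.val)
      = (P.bind fun f => Multiset.map ⇑f Finset.univ.val).map σ := by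
        simp only [Multiset.bind_map, Multiset.map_bind, Multiset.map_map]
        rfl
    _ = Finset.univ.val := by rw [hP, Multiset.map_univ_val_equiv]

variable [NeZero v]

def translateBlock (f : Fin n ↪ Fin v) (i : Fin v) : Fin n ↪ Fin v :=
  f.trans (Equiv.addRight i).toEmbedding

def translateClass (P : Multiset (Fin n ↪ Fin v)) (i : Fin v) : Multiset (Fin n ↪ Fin v) :=
  P.map (translateBlock · i)

theorem IsParallelClass.translateClass {P : Multiset (Fin n ↪ Fin v)} (hP : IsParallelClass P)
    (i : Fin v) : IsParallelClass (translateClass P i) :=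
  hP.map_trans (Equiv.addRight i)

end Translation

def starBlock (c x y z : Fin 12) (h : Function.Injective ![c, x, y, z]) : Fin 4 ↪ Fin 12 :=
  ⟨![c, x, y, z], h⟩

def baseClass : Multiset (Fin 4 ↪ Fin 12) :=
  {starBlock 4 0 3 8 (by decide), starBlock 6 1 2 5 (by decide), starBlock 9 7 10 11 (by decide)}

def shortBlock : Fin 4 ↪ Fin 12 := starBlock 2 0 7 9 (by decide)

def shortClass : Multiset (Fin 4 ↪ Fin 12) :=
  {shortBlock, translateBlock shortBlock 4, translateBlock shortBlock 8}

def designClasses : Multiset (Multiset (Fin 4 ↪ Fin 12)) :=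
  Finset.univ.val.map (translateClass baseClass) +
    ({0, 1, 2, 3} : Multiset (Fin 12)).map (translateClass shortClass)

theorem isParallelClass_baseClass : IsParallelClass baseClass := by
  unfold IsParallelClass
  decide

theorem isParallelClass_shortClass : IsParallelClass shortClass := by
  unfold IsParallelClass
  decide

theorem isParallelClass_of_mem_designClasses {P : Multiset (Fin 4 ↪ Fin 12)}
    (hP : P ∈ designClasses) : IsParallelClass P := by
  simp only [designClasses, Multiset.mem_add, Multiset.mem_map] at hP
  rcases hP with ⟨i, -, rfl⟩ | ⟨i, -, rfl⟩
  · exact isParallelClass_baseClass.translateClass i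
  · exact isParallelClass_shortClass.translateClass i

theorem card_of_mem_designClasses {P : Multiset (Fin 4 ↪ Fin 12)} (hP : P ∈ designClasses) :
    Multiset.card P = 3 := by
  simp only [designClasses, Multiset.mem_add, Multiset.mem_map] at hP
  rcases hP with ⟨i, -, rfl⟩ | ⟨i, -, rfl⟩ <;> rfl

theorem card_designClasses : Multiset.card designClasses = 16 := rfl

set_option maxRecDepth 10000 in
theorem bind_blockEdges_designClasses :
    (designClasses.bind id).bind (fun f => blockEdges star3 f) = 3 • edgeMultiset host43 := by
  simp only [blockEdges, edgeMultiset_eq_edgeFinset_val]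
  decide

theorem stmt13 :
    ∃ classes : Multiset (Multiset (Fin 4 ↪ Fin 12)),
      IsResolvableDecomp 3 star3 host43 classes ∧
      Multiset.card classes = 16 ∧
      ∀ P ∈ classes, Multiset.card P = 3 :=
  ⟨designClasses,
    ⟨fun _ hP => isParallelClass_of_mem_designClasses hP, bind_blockEdges_designClasses⟩,
    card_designClasses, fun _ hP => card_of_mem_designClasses hP⟩
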